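/- The diagonal entries of the triangular matrix F^{|j|} are strictly decreasing in absolute value: for every j ∈ ℤ and every m ≥ 1, |F^{|j|}_{m+1,m+1}| < |F^{|j|}_{m,m}|, where F^{|j|}_{m,m} = a^{|j|,m-1}_{m,m+|j|} with a^{j,k}_{m,n} given by the explicit Zernike coefficient formula. -/

import Mathlib

/-
Write `J = |j|`. Up to the factor `-π^{-1/2}`, the diagonal entry `F_{n+1,n+1}` is
`(J + 2n + 1)^{-1/2} ∏_{i<n} (n - i) / (J + 2n - i)`. Passing from `n` to `n + 1`, the product
gains the factor `(n + 1) / (J + 2n + 2) < 1` while each old factor `(n - i) / (J + 2n + 1 - i)`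
only shrinks, and the square-root prefactor shrinks as well.
-/

open Real

/-- The explicit matrix elements `a^{j,k}_{m,n}` of the linearized EIT forward map
in the Zernike/Fourier bases. -/
noncomputable def acoef (j : ℤ) (k : ℕ) (m n : ℤ) : ℝ :=
  if n = m + j ∧ (k : ℤ) < min |m| |n| ∧ m * n > 0 then
    -(1 / Real.sqrt π) * Real.sqrt ((j.natAbs : ℝ) + 2 * k + 1) /
        (((min |m| |n| : ℤ) : ℝ) + (j.natAbs : ℝ) + k) *
      ∏ i ∈ Finset.Icc 1 k,
        (((min |m| |n| : ℤ) : ℝ) - i) / ((j.natAbs : ℝ) + ((min |m| |n| : ℤ) : ℝ) + k - i)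
  else 0

/-- The entries of the infinite lower triangular matrix `F^{|j|}`:
`F^{|j|}_{m,k} = a^{|j|,k-1}_{m,m+|j|}` for `1 ≤ k ≤ m`, zero otherwise. -/
noncomputable def Fmat (j : ℤ) (m k : ℕ) : ℝ :=
  if 1 ≤ k ∧ k ≤ m then acoef |j| (k - 1) (m : ℤ) ((m : ℤ) + |j|) else 0

open Finset

noncomputable def diagProd (J : ℝ) (n : ℕ) : ℝ :=
  ∏ i ∈ range n, ((n : ℝ) - i) / (J + 2 * n - i)

noncomputable def diagAbs (J : ℝ) (n : ℕ) : ℝ :=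
  (√(J + 2 * n + 1))⁻¹ * diagProd J n

lemma Fmat_succ_diag (j : ℤ) (n : ℕ) :
    Fmat j (n + 1) (n + 1) = -(1 / √π) * diagAbs j.natAbs n := by
  have hmin : min (abs ((n + 1 : ℕ) : ℤ)) (abs (((n + 1 : ℕ) : ℤ) + |j|)) = ((n + 1 : ℕ) : ℤ) := by
    rw [abs_of_nonneg (by positivity), abs_of_nonneg (by positivity)]
    exact min_eq_left (le_add_of_nonneg_right (abs_nonneg j))
  have hcond : ((n + 1 : ℕ) : ℤ) + |j| = ((n + 1 : ℕ) : ℤ) + |j| ∧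
      ((n + 1 - 1 : ℕ) : ℤ) < min (abs ((n + 1 : ℕ) : ℤ)) (abs (((n + 1 : ℕ) : ℤ) + |j|)) ∧
      ((n + 1 : ℕ) : ℤ) * (((n + 1 : ℕ) : ℤ) + |j|) > 0 :=
    ⟨rfl, by rw [hmin]; omega, by positivity⟩
  rw [Fmat, if_pos ⟨le_add_self, le_rfl⟩, acoef, if_pos hcond, hmin, Int.natAbs_abs,
    diagAbs, diagProd, ← Ico_add_one_right_eq_Icc, prod_Ico_eq_prod_range]
  simp only [Nat.add_sub_cancel, Int.cast_natCast]
  push_cast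
  rw [show (n : ℝ) + 1 + j.natAbs + n = j.natAbs + 2 * n + 1 by ring, mul_div_assoc,
    sqrt_div_self', mul_assoc]
  congr 2
  · exact one_div _
  · exact prod_congr rfl fun i _ => by ring

section

variable {J : ℝ} (hJ : 0 ≤ J)
include hJ

lemma diagProd_pos (n : ℕ) : 0 < diagProd J n :=
  prod_pos fun i hi => by
    have hi : (i : ℝ) < n := by exact_mod_cast mem_range.1 hi
    apply div_pos <;> linarith

lemma diagProd_succ_le (n : ℕ) :
    diagProd J (n + 1) ≤ diagProd J n * ((n + 1) / (J + 2 * n + 2)) := by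
  have hlt : ∀ i ∈ range n, (i : ℝ) < n := fun i hi => by exact_mod_cast mem_range.1 hi
  unfold diagProd
  rw [prod_range_succ']
  push_cast
  rw [sub_zero, sub_zero]
  refine mul_le_mul (prod_le_prod (fun i hi => ?_) fun i hi => ?_) (le_of_eq (by ring))
    (div_nonneg (by positivity) (by linarith)) (diagProd_pos hJ n).le
  · have := hlt i hi
    exact div_nonneg (by linarith) (by linarith)
  · have := hlt i hi
    rw [show (n : ℝ) + 1 - (i + 1) = n - i by ring]
    exact div_le_div_of_nonneg_left (by linarith) (by linarith) (by linarith)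

lemma inv_sqrt_two_mul_add_one_pos (n : ℕ) : 0 < (√(J + 2 * n + 1))⁻¹ :=
  inv_pos.2 (sqrt_pos.2 (by positivity))

lemma diagAbs_pos (n : ℕ) : 0 < diagAbs J n :=
  mul_pos (inv_sqrt_two_mul_add_one_pos hJ n) (diagProd_pos hJ n)

lemma diagAbs_succ_lt (n : ℕ) : diagAbs J (n + 1) < diagAbs J n := by
  have hsqrt : (√(J + 2 * (n + 1 : ℕ) + 1))⁻¹ ≤ (√(J + 2 * n + 1))⁻¹ :=
    inv_anti₀ (sqrt_pos.2 (by positivity)) (sqrt_le_sqrt (by push_cast; linarith))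
  have hratio : ((n : ℝ) + 1) / (J + 2 * n + 2) < 1 := (div_lt_one (by positivity)).2 (by linarith)
  calc diagAbs J (n + 1)
      ≤ (√(J + 2 * n + 1))⁻¹ * (diagProd J n * ((n + 1) / (J + 2 * n + 2))) :=
        mul_le_mul hsqrt (diagProd_succ_le hJ n) (diagProd_pos hJ _).le (by positivity)
    _ < diagAbs J n :=
        mul_lt_mul_of_pos_left (mul_lt_of_lt_one_right (diagProd_pos hJ n) hratio)
          (inv_sqrt_two_mul_add_one_pos hJ n)

end

/-- The absolute values of the diagonal entries of `F^{|j|}` are strictly decreasing. -/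
theorem Fmat_diag_strict_anti (j : ℤ) (m : ℕ) (hm : 1 ≤ m) :
    |Fmat j (m + 1) (m + 1)| < |Fmat j m m| := by
  obtain ⟨n, rfl⟩ := Nat.exists_eq_add_of_le' hm
  have hJ : (0 : ℝ) ≤ j.natAbs := Nat.cast_nonneg _
  rw [Fmat_succ_diag, Fmat_succ_diag, abs_mul, abs_mul, abs_of_pos (diagAbs_pos hJ _),
    abs_of_pos (diagAbs_pos hJ _)]
  exact mul_lt_mul_of_pos_left (diagAbs_succ_lt hJ n) (abs_pos.2 (neg_ne_zero.2 (by positivity)))
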